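/- Let S be an abelian semigroup, B a Banach space, n a positive integer, φ : S^{n+1} → [0, ∞), and let g : S^n → B be a symmetric function satisfying ‖D_n g(z)‖ ≤ φ(z) for all z ∈ S^{n+1}. Then ‖g(2y) − 2^n g(y)‖ ≤ r_n φ(y) for every y ∈ S^n, where 2y denotes (2x_1, …, 2x_n) for y = (x_1, …, x_n) and 2x := x + x. -/

import Mathlib

/-!
Write `w_k` for `y` with its first `k` coordinates doubled, so `w_0 = y` and `w_n = 2y`. The
`(n+1)`-tuple in the summand of `r_n φ y` with `k` doubled coordinates lists the coordinates of
`w_k` in a different order (the undoubled ones reversed) and then repeats `x_{k+1}`; hence, `g`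
being symmetric, `D_n g` at that tuple equals `g(w_{k+1}) - 2 g(w_k)`. Weighted by `2^{n-1-k}`,
these differences telescope to `g(2y) - 2^n g(y)`.
-/

/-- The Cauchy difference operator `D_n` for a function of `n = m + 1` variables:
`D_n g (x₁, …, x_{n+1}) = g(x₁, …, x_{n-1}, x_n + x_{n+1}) - g(x₁, …, x_n)
- g(x₁, …, x_{n-1}, x_{n+1})`. -/
def Dop {S B : Type*} [AddCommSemigroup S] [AddCommGroup B] (m : ℕ)
    (g : (Fin (m + 1) → S) → B) (z : Fin (m + 2) → S) : B :=
  g (Function.update (fun i : Fin (m + 1) => z i.castSucc) (Fin.last m)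
      (z (Fin.castSucc (Fin.last m)) + z (Fin.last (m + 1))))
    - g (fun i : Fin (m + 1) => z i.castSucc)
    - g (Function.update (fun i : Fin (m + 1) => z i.castSucc) (Fin.last m)
      (z (Fin.last (m + 1))))

/-- The operator `r_n` for `n = m + 1`:
`r_n φ (x₁, …, x_n) = ∑_{j=1}^{n} 2^{j-1} φ(2x₁, …, 2x_{n-j}, x_n, x_{n-1}, …,
x_{n-j+1}, x_{n-j+1})` (here indexed by `j = jj + 1`, `jj ∈ {0, …, m}`, and tuples are
`0`-indexed: `x_{i+1} = y i`). -/
def rop {S : Type*} [AddCommSemigroup S] (m : ℕ)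
    (φ : (Fin (m + 2) → S) → ℝ) (y : Fin (m + 1) → S) : ℝ :=
  ∑ jj ∈ Finset.range (m + 1), 2 ^ jj *
    φ (fun i : Fin (m + 2) =>
      if h1 : (i : ℕ) < m - jj then y ⟨i, by omega⟩ + y ⟨i, by omega⟩
      else if h2 : m ≤ (i : ℕ) then y ⟨m - jj, by omega⟩
      else y ⟨2 * m - jj - i, by omega⟩)

open Finset Function

theorem sum_pow_smul_sub_smul {B : Type*} [AddCommGroup B] (c : ℕ) (f : ℕ → B) (n : ℕ) :
    ∑ j ∈ range n, c ^ j • (f (n - j) - c • f (n - j - 1)) = f n - c ^ n • f 0 := by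
  induction n with
  | zero => simp
  | succ n ih =>
    simp only [sum_range_succ', Nat.add_sub_add_right, pow_succ', mul_smul, ← smul_sum, ih]
    simp only [pow_zero, one_smul, Nat.sub_zero, Nat.add_sub_cancel, smul_sub]
    abel

section

variable {m : ℕ}

def revAbove (m k : ℕ) : Equiv.Perm (Fin (m + 1)) :=
  Involutive.toPerm (fun i => if h : (i : ℕ) < k then i else ⟨m + k - i, by omega⟩) <| by
    intro i
    by_cases h : (i : ℕ) < k
    · simp [h]
    · have h' : ¬ m + k - (i : ℕ) < k := by omega
      ext
      simp only [h, h', dite_false]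
      omega

theorem revAbove_apply_val (k : ℕ) (i : Fin (m + 1)) :
    (revAbove m k i : ℕ) = if (i : ℕ) < k then (i : ℕ) else m + k - i := by
  show ((if h : (i : ℕ) < k then i else ⟨m + k - i, by omega⟩ : Fin (m + 1)) : ℕ) = _
  split_ifs <;> rfl

theorem revAbove_last {k : ℕ} (hk : k ≤ m) : revAbove m k (Fin.last m) = ⟨k, by omega⟩ := by
  ext
  simp [revAbove_apply_val]
  omega

section Add

variable {S : Type*} [Add S]

def doubleFirst (k : ℕ) (y : Fin (m + 1) → S) : Fin (m + 1) → S :=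
  fun i => if (i : ℕ) < k then y i + y i else y i

theorem doubleFirst_zero (y : Fin (m + 1) → S) : doubleFirst 0 y = y := by
  funext i
  simp [doubleFirst]

theorem doubleFirst_succ_self (y : Fin (m + 1) → S) :
    doubleFirst (m + 1) y = fun i => y i + y i := by
  funext i
  simp [doubleFirst, i.is_lt]

theorem update_doubleFirst (y : Fin (m + 1) → S) (k : Fin (m + 1)) :
    update (doubleFirst k y) k (y k + y k) = doubleFirst ((k : ℕ) + 1) y := by
  funext i
  rcases eq_or_ne i k with rfl | hik
  · simp [doubleFirst]
  · have : (i : ℕ) ≠ k := Fin.val_ne_of_ne hik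
    simp only [update_of_ne hik, doubleFirst]
    split_ifs <;> first | rfl | omega

def ropArg (y : Fin (m + 1) → S) (jj : ℕ) : Fin (m + 2) → S :=
  fun i =>
    if h1 : (i : ℕ) < m - jj then y ⟨i, by omega⟩ + y ⟨i, by omega⟩
    else if h2 : m ≤ (i : ℕ) then y ⟨m - jj, by omega⟩
    else y ⟨2 * m - jj - i, by omega⟩

end Add

variable {S : Type*} [AddCommSemigroup S]

theorem rop_eq_sum_ropArg (φ : (Fin (m + 2) → S) → ℝ) (y : Fin (m + 1) → S) :
    rop m φ y = ∑ jj ∈ range (m + 1), 2 ^ jj * φ (ropArg y jj) :=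
  rfl

theorem ropArg_castSucc (y : Fin (m + 1) → S) {jj : ℕ} (hjj : jj ≤ m) :
    (fun i : Fin (m + 1) => ropArg y jj i.castSucc) =
      doubleFirst (m - jj) y ∘ revAbove m (m - jj) := by
  funext i
  have hσ := revAbove_apply_val (m - jj) i
  have hi := i.is_lt
  simp only [ropArg, doubleFirst, comp_apply, Fin.val_castSucc]
  split_ifs at hσ ⊢ <;> first
    | omega
    | (congr 1; ext; dsimp only; omega)
    | (congr 1 <;> congr 1 <;> ext <;> dsimp only <;> omega)

theorem ropArg_last (y : Fin (m + 1) → S) (jj : ℕ) :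
    ropArg y jj (Fin.last (m + 1)) = y ⟨m - jj, by omega⟩ := by
  simp only [ropArg, Fin.val_last]
  rw [dif_neg (by omega), dif_pos (by omega)]

theorem ropArg_castSucc_last (y : Fin (m + 1) → S) (jj : ℕ) :
    ropArg y jj (Fin.last m).castSucc = y ⟨m - jj, by omega⟩ := by
  simp [ropArg]

theorem Dop_eq_of_eq_comp_perm {B : Type*} [AddCommGroup B] {g : (Fin (m + 1) → S) → B}
    (hg : ∀ (x : Fin (m + 1) → S) (σ : Equiv.Perm (Fin (m + 1))), g (x ∘ σ) = g x)
    {z : Fin (m + 2) → S} {v : Fin (m + 1) → S} {σ : Equiv.Perm (Fin (m + 1))}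
    (hv : (fun i => z i.castSucc) = v ∘ σ) (hz : z (Fin.last m).castSucc = z (Fin.last (m + 1))) :
    Dop m g z = g (update v (σ (Fin.last m)) (z (Fin.last (m + 1)) + z (Fin.last (m + 1))))
      - 2 • g v := by
  have hlast : z (Fin.last (m + 1)) = (v ∘ σ) (Fin.last m) := by rw [← hz, ← congrFun hv]
  have hupd (a : S) : update (v ∘ σ) (Fin.last m) a = update v (σ (Fin.last m)) a ∘ σ := by
    rw [update_comp_equiv, Equiv.symm_apply_apply]
  rw [Dop, hz, hv, hlast, update_eq_self, hupd, hg, hg, two_smul]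
  abel

theorem Dop_ropArg {B : Type*} [AddCommGroup B] {g : (Fin (m + 1) → S) → B}
    (hg : ∀ (x : Fin (m + 1) → S) (σ : Equiv.Perm (Fin (m + 1))), g (x ∘ σ) = g x)
    (y : Fin (m + 1) → S) {jj : ℕ} (hjj : jj ≤ m) :
    Dop m g (ropArg y jj) = g (doubleFirst (m - jj + 1) y) - 2 • g (doubleFirst (m - jj) y) := by
  rw [Dop_eq_of_eq_comp_perm hg (ropArg_castSucc y hjj)
      ((ropArg_castSucc_last y jj).trans (ropArg_last y jj).symm),
    ropArg_last, revAbove_last (by omega)]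
  exact congrArg (g · - _) (update_doubleFirst y ⟨m - jj, by omega⟩)

theorem sub_pow_smul_eq_sum_Dop_ropArg {B : Type*} [AddCommGroup B]
    {g : (Fin (m + 1) → S) → B}
    (hg : ∀ (x : Fin (m + 1) → S) (σ : Equiv.Perm (Fin (m + 1))), g (x ∘ σ) = g x)
    (y : Fin (m + 1) → S) :
    g (fun i => y i + y i) - 2 ^ (m + 1) • g y =
      ∑ jj ∈ range (m + 1), 2 ^ jj • Dop m g (ropArg y jj) := by
  have htel := sum_pow_smul_sub_smul 2 (fun k => g (doubleFirst k y)) (m + 1)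
  simp only [doubleFirst_zero, doubleFirst_succ_self] at htel
  rw [← htel]
  refine sum_congr rfl fun jj hjj => ?_
  have hjj : jj ≤ m := Nat.lt_succ_iff.mp (mem_range.mp hjj)
  rw [Dop_ropArg hg y hjj, Nat.sub_add_comm hjj, Nat.add_sub_cancel]

end

theorem stmt3_general {S B : Type*} [AddCommSemigroup S] [NormedAddCommGroup B]
    (m : ℕ) (φ : (Fin (m + 2) → S) → ℝ)
    (g : (Fin (m + 1) → S) → B)
    (hgsym : ∀ (x : Fin (m + 1) → S) (σ : Equiv.Perm (Fin (m + 1))), g (x ∘ σ) = g x)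
    (hgD : ∀ z, ‖Dop m g z‖ ≤ φ z) (y : Fin (m + 1) → S) :
    ‖g (fun i => y i + y i) - 2 ^ (m + 1) • g y‖ ≤ rop m φ y := by
  calc ‖g (fun i => y i + y i) - 2 ^ (m + 1) • g y‖
      = ‖∑ jj ∈ range (m + 1), 2 ^ jj • Dop m g (ropArg y jj)‖ := by
        rw [sub_pow_smul_eq_sum_Dop_ropArg hgsym]
    _ ≤ ∑ jj ∈ range (m + 1), ‖2 ^ jj • Dop m g (ropArg y jj)‖ := norm_sum_le _ _
    _ ≤ ∑ jj ∈ range (m + 1), 2 ^ jj * φ (ropArg y jj) := by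
        refine sum_le_sum fun jj _ => norm_nsmul_le.trans ?_
        push_cast
        gcongr
        exact hgD _
    _ = rop m φ y := (rop_eq_sum_ropArg φ y).symm

/-- If a symmetric `g` satisfies `‖D_n g z‖ ≤ φ z` then
`‖g (2y) - 2ⁿ g y‖ ≤ r_n φ y` (where `n = m + 1` and `2x := x + x`). -/
theorem stmt3 {S B : Type*} [AddCommSemigroup S] [NormedAddCommGroup B]
    [NormedSpace ℝ B] [CompleteSpace B]
    (m : ℕ) (φ : (Fin (m + 2) → S) → ℝ) (hφ : ∀ z, 0 ≤ φ z)
    (g : (Fin (m + 1) → S) → B)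
    (hgsym : ∀ (x : Fin (m + 1) → S) (σ : Equiv.Perm (Fin (m + 1))), g (x ∘ σ) = g x)
    (hgD : ∀ z, ‖Dop m g z‖ ≤ φ z) (y : Fin (m + 1) → S) :
    ‖g (fun i => y i + y i) - 2 ^ (m + 1) • g y‖ ≤ rop m φ y :=
  stmt3_general m φ g hgsym hgD y
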